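/- arXiv:2602.03711 — 2 statements merged into one kernel-verified Lean document; each statement's English description precedes it below -/
import Mathlib

section
/- Let V be a finite index set and, for each v ∈ V, let W_v > 0, Ξ1_v > 0, Ξ3_v > 0, c_v > 0 and d_v ≥ 0 be real constants. Then the function F(R) = Σ_{v ∈ V} c_v / (1 − exp(Ξ1_v − Ξ3_v/(2^{R_v/W_v} − 1))) + max_{v ∈ V} d_v·exp(−(2^{R_v/W_v} − 1)), defined for R : V → ℝ, is convex on the convex set {R : for all v ∈ V, 0 < R_v < W_v·log₂(1 + Ξ3_v/Ξ1_v)}. -/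
/-! Put `y = 2 ^ (R_v / W_v) - 1`, a convex function of `R_v` with values in `(0, b/a)` on the
feasible box (`a = Ξ1_v`, `b = Ξ3_v`). The convergence penalty is `g y = c / (1 - exp (a - b/y))`,
which is increasing on `(0, b/a)`, and convex there: `g''` has the sign of
`b (1 + E) - 2 y (1 - E)` with `E = exp (a - b/y)`, and writing `b = y (s + a)`, `E = exp (-s)`,
this is nonnegative because `tanh (s/2) ≤ s/2`. An increasing convex function of a convex one is
convex. The round-time penalty is a nonnegative multiple of `exp (-exp (k R_v))` with `k ≥ 0`, and
`t ↦ exp (-exp t)` is convex for `t ≥ 0`. Sums and finite maxima of convex functions are convex. -/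

open Real Set

section

variable {𝕜 E F β ι : Type*} [Semiring 𝕜] [PartialOrder 𝕜] [AddCommMonoid E] [SMul 𝕜 E]
  [AddCommMonoid β] [PartialOrder β] {s : Set E}

theorem ConvexOn.comp_of_mapsTo [AddCommMonoid F] [PartialOrder F] [SMul 𝕜 F] [SMul 𝕜 β]
    {f : E → F} {g : F → β} {t : Set F} (hg : ConvexOn 𝕜 t g) (hf : ConvexOn 𝕜 s f)
    (hg' : MonotoneOn g t) (hst : MapsTo f s t) : ConvexOn 𝕜 s (g ∘ f) :=
  ⟨hf.1, fun _ hx _ hy _ _ ha hb hab =>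
    (hg' (hst (hf.1 hx hy ha hb hab)) (hg.1 (hst hx) (hst hy) ha hb hab)
      (hf.2 hx hy ha hb hab)).trans (hg.2 (hst hx) (hst hy) ha hb hab)⟩

theorem ConvexOn.finset_sum [IsOrderedAddMonoid β] [DistribMulAction 𝕜 β] {t : Finset ι}
    {f : ι → E → β} (hs : Convex 𝕜 s) (hf : ∀ i ∈ t, ConvexOn 𝕜 s (f i)) :
    ConvexOn 𝕜 s fun x => ∑ i ∈ t, f i x := by
  induction t using Finset.cons_induction with
  | empty => exact ⟨hs, fun _ _ _ _ _ _ _ _ _ => by simp⟩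
  | cons i t _ ih =>
    simp only [Finset.sum_cons]
    exact (hf i (Finset.mem_cons_self i t)).add (ih fun j hj => hf j (Finset.mem_cons_of_mem hj))

end

section

variable {𝕜 E β ι : Type*} [Semiring 𝕜] [PartialOrder 𝕜] [AddCommMonoid E] [SMul 𝕜 E]
  [AddCommMonoid β] [LinearOrder β] [IsOrderedAddMonoid β] [Module 𝕜 β] [PosSMulStrictMono 𝕜 β]
  {s : Set E}

theorem ConvexOn.finset_sup' {t : Finset ι} (ht : t.Nonempty) {f : ι → E → β}
    (hf : ∀ i ∈ t, ConvexOn 𝕜 s (f i)) : ConvexOn 𝕜 s fun x => t.sup' ht fun i => f i x := by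
  induction ht using Finset.Nonempty.cons_induction with
  | singleton i => simpa using hf i (Finset.mem_singleton_self i)
  | cons i t _ ht ih =>
    simp only [Finset.sup'_cons ht]
    exact (hf i (Finset.mem_cons_self i t)).sup (ih fun j hj => hf j (Finset.mem_cons_of_mem hj))

end

theorem ConvexOn.comp_eval {𝕜 ι β : Type*} {E : ι → Type*} [Semiring 𝕜] [PartialOrder 𝕜]
    [∀ i, AddCommMonoid (E i)] [∀ i, Module 𝕜 (E i)] [AddCommMonoid β] [PartialOrder β]
    [SMul 𝕜 β] {s : ∀ i, Set (E i)} {i : ι} {f : E i → β} (hs : ∀ j, Convex 𝕜 (s j))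
    (hf : ConvexOn 𝕜 (s i) f) : ConvexOn 𝕜 (univ.pi s) fun x => f (x i) :=
  (hf.comp_linearMap (LinearMap.proj i)).subset (fun _ hx => hx i (mem_univ i))
    (convex_pi fun j _ => hs j)

theorem two_mul_one_sub_exp_neg_le {s : ℝ} (hs : 0 ≤ s) :
    2 * (1 - exp (-s)) ≤ s * (1 + exp (-s)) := by
  let φ : ℝ → ℝ := fun s => s * (1 + exp (-s)) - 2 * (1 - exp (-s))
  have hφ : ∀ x, HasDerivAt φ (1 - (1 + x) * exp (-x)) x := fun x => by
    have hE := (hasDerivAt_neg x).exp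
    refine (((hasDerivAt_id' x).mul (hE.const_add 1)).sub
      ((hE.const_sub 1).const_mul 2)).congr_deriv ?_
    ring
  have hφ' : ∀ x, 0 ≤ 1 - (1 + x) * exp (-x) := fun x => by
    have : (1 + x) * exp (-x) ≤ exp x * exp (-x) :=
      mul_le_mul_of_nonneg_right (by linarith [add_one_le_exp x]) (exp_pos _).le
    rw [← exp_add, add_neg_cancel, exp_zero] at this
    linarith
  have hmono : MonotoneOn φ (Ici 0) :=
    monotoneOn_of_hasDerivWithinAt_nonneg (convex_Ici 0)
      (fun x _ => (hφ x).continuousAt.continuousWithinAt) (fun x _ => (hφ x).hasDerivWithinAt)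
      fun x _ => hφ' x
  have hφs := hmono self_mem_Ici hs hs
  simp only [φ, neg_zero, exp_zero] at hφs
  linarith

section

variable {a b c y : ℝ}

theorem hasDerivAt_exp_sub_div (hy : y ≠ 0) :
    HasDerivAt (fun y => exp (a - b / y)) (exp (a - b / y) * (b / y ^ 2)) y := by
  refine (((hasDerivAt_const y b).div (hasDerivAt_id' y) hy).const_sub a).exp.congr_deriv ?_
  simp only [Pi.div_apply]
  field_simp
  ring

theorem hasDerivAt_div_one_sub_exp_sub_div (hy : y ≠ 0) (hE : exp (a - b / y) ≠ 1) :
    HasDerivAt (fun y => c / (1 - exp (a - b / y)))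
      (c * b * exp (a - b / y) / (y ^ 2 * (1 - exp (a - b / y)) ^ 2)) y := by
  refine ((hasDerivAt_const y c).div ((hasDerivAt_exp_sub_div hy).const_sub 1)
    (sub_ne_zero.2 hE.symm)).congr_deriv ?_
  field_simp
  ring

theorem lt_div_of_mem_Ioo_div (ha : 0 < a) (hy : y ∈ Ioo 0 (b / a)) : a < b / y :=
  (lt_div_iff₀ hy.1).2 (by linarith [(lt_div_iff₀ ha).1 hy.2])

theorem exp_sub_div_lt_one (ha : 0 < a) (hy : y ∈ Ioo 0 (b / a)) : exp (a - b / y) < 1 :=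
  exp_lt_one_iff.2 (sub_neg.2 (lt_div_of_mem_Ioo_div ha hy))

theorem two_mul_mul_one_sub_exp_sub_div_le (ha : 0 ≤ a) (hy : 0 < y) (hay : a ≤ b / y) :
    2 * y * (1 - exp (a - b / y)) ≤ b * (1 + exp (a - b / y)) := by
  have key := two_mul_one_sub_exp_neg_le (sub_nonneg.2 hay)
  rw [neg_sub] at key
  calc 2 * y * (1 - exp (a - b / y)) = y * (2 * (1 - exp (a - b / y))) := by ring
    _ ≤ y * ((b / y - a) * (1 + exp (a - b / y))) := mul_le_mul_of_nonneg_left key hy.le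
    _ ≤ y * ((b / y - a) * (1 + exp (a - b / y))) + a * y * (1 + exp (a - b / y)) :=
      le_add_of_nonneg_right (by positivity)
    _ = b * (1 + exp (a - b / y)) := by field_simp; ring

theorem monotoneOn_div_one_sub_exp_sub_div (hc : 0 ≤ c) (ha : 0 < a) :
    MonotoneOn (fun y => c / (1 - exp (a - b / y))) (Ioo 0 (b / a)) := by
  have hderiv : ∀ y ∈ Ioo 0 (b / a), HasDerivAt (fun y => c / (1 - exp (a - b / y)))
      (c * b * exp (a - b / y) / (y ^ 2 * (1 - exp (a - b / y)) ^ 2)) y := fun y hy =>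
    hasDerivAt_div_one_sub_exp_sub_div hy.1.ne' (exp_sub_div_lt_one ha hy).ne
  refine monotoneOn_of_hasDerivWithinAt_nonneg (convex_Ioo _ _)
    (fun y hy => (hderiv y hy).continuousAt.continuousWithinAt)
    (fun y hy => (hderiv y (interior_subset hy)).hasDerivWithinAt) fun y hy => ?_
  rw [interior_Ioo] at hy
  have hb : 0 < b := (div_pos_iff_of_pos_right ha).1 (hy.1.trans hy.2)
  positivity

theorem convexOn_div_one_sub_exp_sub_div (hc : 0 ≤ c) (ha : 0 < a) :
    ConvexOn ℝ (Ioo 0 (b / a)) fun y => c / (1 - exp (a - b / y)) := by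
  have hderiv : ∀ y ∈ Ioo 0 (b / a), HasDerivAt (fun y => c / (1 - exp (a - b / y)))
      (c * b * exp (a - b / y) / (y ^ 2 * (1 - exp (a - b / y)) ^ 2)) y := fun y hy =>
    hasDerivAt_div_one_sub_exp_sub_div hy.1.ne' (exp_sub_div_lt_one ha hy).ne
  have hderiv2 : ∀ y ∈ Ioo 0 (b / a),
      HasDerivAt (fun y => c * b * exp (a - b / y) / (y ^ 2 * (1 - exp (a - b / y)) ^ 2))
        (c * b * exp (a - b / y) * (b * (1 + exp (a - b / y)) - 2 * y * (1 - exp (a - b / y))) /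
          (y ^ 4 * (1 - exp (a - b / y)) ^ 3)) y := fun y hy => by
    have hy0 := hy.1.ne'
    have hE := sub_ne_zero.2 (exp_sub_div_lt_one ha hy).ne'
    have h := hasDerivAt_exp_sub_div (a := a) (b := b) hy0
    refine ((h.const_mul (c * b)).div ((hasDerivAt_pow 2 y).mul ((h.const_sub 1).pow 2))
      (mul_ne_zero (pow_ne_zero 2 hy0) (pow_ne_zero 2 hE))).congr_deriv ?_
    simp only [Pi.mul_apply, Pi.pow_apply]
    generalize exp (a - b / y) = E at hE ⊢
    field_simp
    ring
  refine convexOn_of_hasDerivWithinAt2_nonneg (convex_Ioo _ _)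
    (fun y hy => (hderiv y hy).continuousAt.continuousWithinAt)
    (fun y hy => (hderiv y (interior_subset hy)).hasDerivWithinAt)
    (fun y hy => (hderiv2 y (interior_subset hy)).hasDerivWithinAt) fun y hy => ?_
  rw [interior_Ioo] at hy
  have hb : 0 < b := (div_pos_iff_of_pos_right ha).1 (hy.1.trans hy.2)
  have hE : 0 < 1 - exp (a - b / y) := sub_pos.2 (exp_sub_div_lt_one ha hy)
  have hbracket := sub_nonneg.2
    (two_mul_mul_one_sub_exp_sub_div_le ha.le hy.1 (lt_div_of_mem_Ioo_div ha hy).le)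
  have hy0 := hy.1
  positivity

end

section

variable {β W q : ℝ}

theorem convexOn_rpow_div_sub_one (hβ : 0 < β) : ConvexOn ℝ univ fun x => β ^ (x / W) - 1 := by
  have h : (fun x => β ^ (x / W) - 1) = fun x => (β ^ W⁻¹) ^ x + -1 := by
    funext x
    rw [← rpow_mul hβ.le, inv_mul_eq_div, sub_eq_add_neg]
  rw [h]
  exact (convexOn_rpow_left (rpow_pos_of_pos hβ _)).add_const (-1)

theorem mapsTo_rpow_div_sub_one (hβ : 1 < β) (hW : 0 < W) (hq : 0 < 1 + q) :
    MapsTo (fun x => β ^ (x / W) - 1) (Ioo 0 (W * logb β (1 + q))) (Ioo 0 q) := by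
  rintro x ⟨hx0, hxq⟩
  have h1 : 1 < β ^ (x / W) := one_lt_rpow hβ (div_pos hx0 hW)
  have h2 : β ^ (x / W) < 1 + q :=
    calc β ^ (x / W) < β ^ logb β (1 + q) :=
          rpow_lt_rpow_of_exponent_lt hβ ((div_lt_iff₀' hW).2 hxq)
      _ = 1 + q := rpow_logb (by linarith) hβ.ne' hq
  exact ⟨by linarith, by linarith⟩

end

theorem convexOn_div_one_sub_exp_sub_div_rpow {a b c β W : ℝ} (hc : 0 ≤ c) (ha : 0 < a)
    (hb : 0 ≤ b) (hβ : 1 < β) (hW : 0 < W) :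
    ConvexOn ℝ (Ioo 0 (W * logb β (1 + b / a)))
      fun x => c / (1 - exp (a - b / (β ^ (x / W) - 1))) :=
  (convexOn_div_one_sub_exp_sub_div hc ha).comp_of_mapsTo
    ((convexOn_rpow_div_sub_one (by linarith)).subset (subset_univ _) (convex_Ioo _ _))
    (monotoneOn_div_one_sub_exp_sub_div hc ha) (mapsTo_rpow_div_sub_one hβ hW (by positivity))

theorem convexOn_exp_neg_exp : ConvexOn ℝ (Ici 0) fun t => exp (-exp t) := by
  have hderiv : ∀ t, HasDerivAt (fun t => exp (-exp t)) (-(exp t * exp (-exp t))) t :=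
    fun t => (hasDerivAt_exp t).neg.exp.congr_deriv (by simp only [Pi.neg_apply]; ring)
  have hderiv2 : ∀ t, HasDerivAt (fun t => -(exp t * exp (-exp t)))
      (exp t * (exp t - 1) * exp (-exp t)) t :=
    fun t => ((hasDerivAt_exp t).mul (hasDerivAt_exp t).neg.exp).neg.congr_deriv
      (by simp only [Pi.neg_apply]; ring)
  refine convexOn_of_hasDerivWithinAt2_nonneg (convex_Ici 0)
    (fun t _ => (hderiv t).continuousAt.continuousWithinAt) (fun t _ => (hderiv t).hasDerivWithinAt)
    (fun t _ => (hderiv2 t).hasDerivWithinAt) fun t ht => ?_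
  rw [interior_Ici] at ht
  have : 0 ≤ exp t - 1 := sub_nonneg.2 (one_le_exp ht.le)
  positivity

theorem convexOn_mul_exp_neg_rpow_div_sub_one {d β W : ℝ} (hd : 0 ≤ d) (hβ : 1 ≤ β)
    (hW : 0 ≤ W) : ConvexOn ℝ (Ici 0) fun x => d * exp (-(β ^ (x / W) - 1)) := by
  have hk : 0 ≤ log β / W := div_nonneg (log_nonneg hβ) hW
  refine (((convexOn_exp_neg_exp.comp_linearMap (LinearMap.mul ℝ ℝ (log β / W))).subset
    (fun x hx => mul_nonneg hk hx) (convex_Ici 0)).smul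
    (by positivity : 0 ≤ d * exp 1)).congr fun x _ => ?_
  simp only [Function.comp_apply, LinearMap.mul_apply', smul_eq_mul,
    rpow_def_of_pos (by linarith : 0 < β)]
  rw [mul_assoc, ← exp_add]
  ring_nf

theorem stmt_2 {V : Type*} [Fintype V] [Nonempty V]
    (W Ξ1 Ξ3 c d : V → ℝ)
    (hW : ∀ v, 0 < W v) (hΞ1 : ∀ v, 0 < Ξ1 v) (hΞ3 : ∀ v, 0 < Ξ3 v)
    (hc : ∀ v, 0 < c v) (hd : ∀ v, 0 ≤ d v) :
    ConvexOn ℝ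
      {R : V → ℝ | ∀ v, 0 < R v ∧ R v < W v * Real.logb 2 (1 + Ξ3 v / Ξ1 v)}
      (fun R : V → ℝ =>
        (∑ v, c v / (1 - Real.exp (Ξ1 v - Ξ3 v / ((2 : ℝ) ^ (R v / W v) - 1)))) +
          Finset.univ.sup' Finset.univ_nonempty
            (fun v => d v * Real.exp (-((2 : ℝ) ^ (R v / W v) - 1)))) := by
  have hS : {R : V → ℝ | ∀ v, 0 < R v ∧ R v < W v * logb 2 (1 + Ξ3 v / Ξ1 v)} =
      univ.pi fun v => Ioo 0 (W v * logb 2 (1 + Ξ3 v / Ξ1 v)) := by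
    ext R
    simp only [mem_ofPred_eq, mem_pi, mem_univ, true_imp_iff, mem_Ioo]
  have hconv : ∀ v, Convex ℝ (Ioo 0 (W v * logb 2 (1 + Ξ3 v / Ξ1 v))) := fun _ => convex_Ioo _ _
  rw [hS]
  refine (ConvexOn.finset_sum (convex_pi fun v _ => hconv v) fun v _ => ?_).add
    (ConvexOn.finset_sup' _ fun v _ => ?_)
  · exact ConvexOn.comp_eval hconv
      (convexOn_div_one_sub_exp_sub_div_rpow (hc v).le (hΞ1 v) (hΞ3 v).le one_lt_two (hW v))
  · exact ConvexOn.comp_eval hconv ((convexOn_mul_exp_neg_rpow_div_sub_one (hd v) one_le_two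
      (hW v).le).subset (fun _ hx => hx.1.le) (hconv v))
end

section
/- Let W > 0, Ξ1 > 0 and Ξ3 > 0 be real constants. Then for every f in the open interval (1, 1 + Ξ3/Ξ1), setting e = exp(Ξ1 − Ξ3/(f − 1)), the following strict inequality holds: (Ξ3·(ln 2 / W)·f/(f − 1)²)²·(1 + e) − Ξ3·(ln 2 / W)²·f·(f + 1)/(f − 1)³·(1 − e) > 0. -/
/-!
Writing `s = Ξ3 / (f - 1)` and `E = exp (Ξ1 - s)`, the expression factors as
`(ln 2 / W)² f s / (f - 1)² · (s f (1 + E) - (f + 1)(1 - E))`, and the bracket equals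
`(s (1 + E) - 2 (1 - E)) + (f - 1)(s (1 + E) - (1 - E))`. With `u = s - Ξ1 ∈ (0, s)` we have
`E = exp (-u)`, so everything reduces to `2 (1 - exp (-u)) < u (1 + exp (-u))`, i.e. `tanh (u / 2) < u / 2`,
which is the Padé-type bound `(2 - u) exp u < 2 + u`.
-/

open Real Set

lemma one_sub_mul_exp_lt_one {x : ℝ} (hx : x ≠ 0) : (1 - x) * exp x < 1 :=
  calc (1 - x) * exp x < exp (-x) * exp x := by
        gcongr; linarith [add_one_lt_exp (neg_ne_zero.mpr hx)]
    _ = 1 := by rw [← exp_add, neg_add_cancel, exp_zero]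

lemma hasDerivAt_two_add_sub_two_sub_mul_exp (x : ℝ) :
    HasDerivAt (fun u => 2 + u - (2 - u) * exp u) (1 - (1 - x) * exp x) x := by
  have h := ((hasDerivAt_id' x).const_add 2).sub
    (((hasDerivAt_id' x).const_sub 2).mul (hasDerivAt_exp x))
  exact h.congr_deriv (by ring)

lemma two_sub_mul_exp_lt_two_add {u : ℝ} (hu : 0 < u) : (2 - u) * exp u < 2 + u := by
  have hmono : StrictMonoOn (fun u => 2 + u - (2 - u) * exp u) (Ici 0) :=
    strictMonoOn_of_deriv_pos (convex_Ici 0) (by fun_prop) fun x hx => by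
      rw [interior_Ici] at hx
      rw [(hasDerivAt_two_add_sub_two_sub_mul_exp x).deriv]
      exact sub_pos.mpr (one_sub_mul_exp_lt_one (ne_of_gt hx))
  have := hmono self_mem_Ici hu.le hu
  simp only [add_zero, sub_zero, exp_zero, mul_one, sub_self] at this
  linarith

lemma two_mul_one_sub_exp_neg_lt {u : ℝ} (hu : 0 < u) :
    2 * (1 - exp (-u)) < u * (1 + exp (-u)) := by
  have hmul : exp u * exp (-u) = 1 := by rw [← exp_add, add_neg_cancel, exp_zero]
  have := mul_lt_mul_of_pos_right (two_sub_mul_exp_lt_two_add hu) (exp_pos (-u))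
  linear_combination this - (2 - u) * hmul

lemma add_one_mul_one_sub_lt {s f E : ℝ} (hf : 1 ≤ f) (hE : E ≤ 1)
    (hs : 2 * (1 - E) < s * (1 + E)) : (f + 1) * (1 - E) < s * f * (1 + E) := by
  have hrest : 0 ≤ (f - 1) * (s * (1 + E) - (1 - E)) :=
    mul_nonneg (sub_nonneg.mpr hf) (by linarith)
  linarith

theorem stmt_14 (W Ξ1 Ξ3 : ℝ) (hW : 0 < W) (hΞ1 : 0 < Ξ1) (hΞ3 : 0 < Ξ3) :
    ∀ f ∈ Set.Ioo (1 : ℝ) (1 + Ξ3 / Ξ1),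
      (Ξ3 * (Real.log 2 / W) * f / (f - 1) ^ 2) ^ 2 *
          (1 + Real.exp (Ξ1 - Ξ3 / (f - 1))) -
        Ξ3 * (Real.log 2 / W) ^ 2 * (f * (f + 1)) / (f - 1) ^ 3 *
          (1 - Real.exp (Ξ1 - Ξ3 / (f - 1))) > 0 := by
  rintro f ⟨hf1, hf2⟩
  have ht : 0 < f - 1 := sub_pos.mpr hf1
  set s := Ξ3 / (f - 1) with hs
  have hΞ1s : Ξ1 < s := by
    rw [lt_div_iff₀ ht, mul_comm, ← lt_div_iff₀ hΞ1]
    linarith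
  set E := exp (Ξ1 - s)
  have hE : E = exp (-(s - Ξ1)) := by rw [neg_sub]
  have hpade : 2 * (1 - E) < s * (1 + E) :=
    calc 2 * (1 - E) < (s - Ξ1) * (1 + E) := hE ▸ two_mul_one_sub_exp_neg_lt (sub_pos.mpr hΞ1s)
      _ ≤ s * (1 + E) := by gcongr; linarith
  have hbracket := add_one_mul_one_sub_lt hf1.le (exp_lt_one_iff.mpr (by linarith)).le hpade
  have hfactor : (Ξ3 * (log 2 / W) * f / (f - 1) ^ 2) ^ 2 * (1 + E) -
      Ξ3 * (log 2 / W) ^ 2 * (f * (f + 1)) / (f - 1) ^ 3 * (1 - E) =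
      (log 2 / W) ^ 2 * f / (f - 1) ^ 2 * s * (s * f * (1 + E) - (f + 1) * (1 - E)) := by
    rw [hs]; field_simp
  rw [gt_iff_lt, hfactor]
  have : 0 < s := div_pos hΞ3 ht
  exact mul_pos (by positivity) (sub_pos.mpr hbracket)
end
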